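/- arXiv:1602.08068 — 7 statements merged into one kernel-verified Lean document; each statement's English description precedes it below -/
import Mathlib

section
/- For all natural numbers j and t with t ≥ 1, the sum over s from 1 to t of C(t,s)/C(j+t,s) equals t/(j+1). -/
/-!
Double counting pairs `S ⊆ T` with `#S = s`, `#T = t` inside a `(j + t)`-set gives
`C(t,s) / C(j+t,s) = C(j+t-s, j) / C(j+t, j)`. By the hockey-stick identity the numerators sum to
`C(j+t, j+1)`, and `C(j+t, j+1) / C(j+t, j) = t / (j+1)`.
-/

open Finset

namespace Nat

variable {K : Type*} [Field K] [CharZero K]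

theorem cast_choose_div_cast_add_choose {j t s : ℕ} (hs : s ≤ t) :
    (t.choose s : K) / (j + t).choose s = (j + t - s).choose j / (j + t).choose j := by
  have key : t.choose s * (j + t).choose j = (j + t - s).choose j * (j + t).choose s := by
    rw [mul_comm, choose_symm_add, choose_mul hs, mul_comm,
      choose_symm_of_eq_add (by omega : j + t - s = t - s + j)]
  rw [div_eq_div_iff (by exact_mod_cast (choose_pos (by omega)).ne')
    (by exact_mod_cast (choose_pos (by omega)).ne')]
  exact_mod_cast key

theorem sum_range_add_choose' (t j : ℕ) :
    ∑ i ∈ range t, (i + j).choose j = (t + j).choose (j + 1) := by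
  cases t with
  | zero => simp
  | succ t => rw [sum_range_add_choose, add_right_comm]

theorem sum_Icc_one_add_sub_choose (j t : ℕ) :
    ∑ s ∈ Icc 1 t, (j + t - s).choose j = (j + t).choose (j + 1) := by
  calc ∑ s ∈ Icc 1 t, (j + t - s).choose j
      = ∑ s ∈ Ico 1 (t + 1), (t - s + j).choose j := by
        rw [Ico_add_one_right_eq_Icc]
        exact sum_congr rfl fun s hs => by rw [(by grind : j + t - s = t - s + j)]
    _ = ∑ i ∈ range t, (i + j).choose j := by
        rw [sum_Ico_reflect (fun i => (i + j).choose j) 1 le_rfl, range_eq_Ico]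
        simp
    _ = (j + t).choose (j + 1) := by rw [sum_range_add_choose', add_comm]

theorem cast_choose_succ_div_cast_choose {n k : ℕ} (hk : k ≤ n) :
    (n.choose (k + 1) : K) / n.choose k = (n - k : ℕ) / (k + 1) := by
  rw [div_eq_div_iff (by exact_mod_cast (choose_pos hk).ne') (cast_add_one_ne_zero k)]
  exact_mod_cast (choose_succ_right_eq n k).trans (mul_comm _ _)

end Nat

theorem binom_ratio_sum_general (j t : ℕ) :
    ∑ s ∈ Finset.Icc 1 t, (Nat.choose t s : ℚ) / (Nat.choose (j + t) s : ℚ)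
      = (t : ℚ) / (j + 1) := by
  calc ∑ s ∈ Icc 1 t, (t.choose s : ℚ) / (j + t).choose s
      = ∑ s ∈ Icc 1 t, ((j + t - s).choose j : ℚ) / (j + t).choose j :=
        sum_congr rfl fun s hs => Nat.cast_choose_div_cast_add_choose (mem_Icc.1 hs).2
    _ = ((j + t).choose (j + 1) : ℚ) / (j + t).choose j := by
        rw [← sum_div, ← Nat.cast_sum, Nat.sum_Icc_one_add_sub_choose]
    _ = t / (j + 1) := by
        rw [Nat.cast_choose_succ_div_cast_choose (Nat.le_add_right j t), add_tsub_cancel_left]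

theorem binom_ratio_sum (j t : ℕ) (ht : 1 ≤ t) :
    ∑ s ∈ Finset.Icc 1 t, (Nat.choose t s : ℚ) / (Nat.choose (j + t) s : ℚ)
      = (t : ℚ) / (j + 1) :=
  binom_ratio_sum_general j t
end

section
/- For all natural numbers j and t with t ≥ 1, the sum over s from 1 to t of s·C(t,s)/C(j+t,s) equals t(j+t+1)/((j+1)(j+2)). -/
/-!
For `s ≤ t`, `C(t, s) / C(j + t, s) = C(j + t - s, j) / C(j + t, t)` (count the pairs `A ⊆ B`
with `|A| = s`, `|B| = t` inside a `(j + t)`-set in two ways). The sum therefore becomes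
`∑ s · C(j + t - s, j) / C(j + t, t)`, and two applications of the hockey-stick identity give
`∑ s · C(j + t - s, j) = C(j + t + 1, j + 2)`, whose ratio to `C(j + t, t)` is the claimed value.
-/

open Finset

theorem Nat.sum_range_sub_mul_add_choose (t j : ℕ) :
    ∑ i ∈ range t, (t - i) * (i + j).choose j = (t + j + 1).choose (j + 2) := by
  induction t with
  | zero => simp
  | succ t ih =>
    have hsplit : ∑ i ∈ range (t + 1), (t + 1 - i) * (i + j).choose j
        = ∑ i ∈ range (t + 1), (t - i) * (i + j).choose j
          + ∑ i ∈ range (t + 1), (i + j).choose j := by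
      rw [← sum_add_distrib]
      refine sum_congr rfl fun i hi => ?_
      rw [Nat.sub_add_comm (mem_range_succ_iff.mp hi), add_one_mul]
    rw [hsplit, sum_range_succ, Nat.sub_self, zero_mul, add_zero, ih, sum_range_add_choose,
      add_comm, ← Nat.choose_succ_succ', add_right_comm t 1 j]

theorem Nat.sum_Icc_mul_choose_add_sub (j t : ℕ) :
    ∑ s ∈ Icc 1 t, s * (j + t - s).choose j = (j + t + 1).choose (j + 2) := by
  rw [add_comm j t, ← Nat.sum_range_sub_mul_add_choose, ← sum_range_reflect,
    ← Ico_add_one_right_eq_Icc, sum_Ico_eq_sum_range, Nat.add_sub_cancel]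
  refine sum_congr rfl fun i hi => ?_
  have hi : i < t := mem_range.mp hi
  rw [show t + j - (1 + i) = t - 1 - i + j by omega, show t - (t - 1 - i) = 1 + i by omega]

theorem Nat.cast_choose_div_cast_choose {K : Type*} [Field K] [CharZero K] {n k s : ℕ}
    (hsk : s ≤ k) (hkn : k ≤ n) :
    (k.choose s : K) / n.choose s = (n - s).choose (k - s) / n.choose k := by
  have hns : (n.choose s : K) ≠ 0 := Nat.cast_ne_zero.mpr (Nat.choose_pos (hsk.trans hkn)).ne'
  have hnk : (n.choose k : K) ≠ 0 := Nat.cast_ne_zero.mpr (Nat.choose_pos hkn).ne'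
  rw [div_eq_div_iff hns hnk]
  norm_cast
  rw [mul_comm, Nat.choose_mul hsk, mul_comm]

theorem Nat.cast_choose_add_two_div_cast_choose {K : Type*} [Field K] [CharZero K] (j t : ℕ) :
    ((j + t + 1).choose (j + 2) : K) / (j + t).choose t
      = t * (j + t + 1) / ((j + 1) * (j + 2)) := by
  have h₁ : ((j + t + 1 : ℕ) : K) * (j + t).choose (j + 1)
      = (j + t + 1).choose (j + 2) * (j + 2) := by
    exact_mod_cast Nat.add_one_mul_choose_eq (j + t) (j + 1)
  have h₂ : ((j + t).choose (j + 1) : K) * (j + 1) = (j + t).choose t * t := by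
    have := Nat.choose_succ_right_eq (j + t) j
    rw [Nat.add_sub_cancel_left, Nat.choose_symm_add] at this
    exact_mod_cast this
  have hne : ((j + t).choose t : K) ≠ 0 :=
    Nat.cast_ne_zero.mpr (Nat.choose_pos (Nat.le_add_left t j)).ne'
  rw [div_eq_div_iff hne (by norm_cast)]
  push_cast at h₁
  linear_combination (j + 1 : K) * h₁.symm + (j + t + 1 : K) * h₂

theorem binom_ratio_sum_weighted_general (j t : ℕ) :
    ∑ s ∈ Finset.Icc 1 t, (s : ℚ) * (Nat.choose t s : ℚ) / (Nat.choose (j + t) s : ℚ)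
      = (t : ℚ) * (j + t + 1) / ((j + 1) * (j + 2)) := by
  calc ∑ s ∈ Icc 1 t, (s : ℚ) * t.choose s / (j + t).choose s
      = ∑ s ∈ Icc 1 t, ((s * (j + t - s).choose j : ℕ) : ℚ) / (j + t).choose t := by
        refine sum_congr rfl fun s hs => ?_
        have hst : s ≤ t := (mem_Icc.mp hs).2
        rw [mul_div_assoc, Nat.cast_choose_div_cast_choose hst (Nat.le_add_left t j),
          Nat.choose_symm_of_eq_add (by omega : j + t - s = (t - s) + j), Nat.cast_mul,
          mul_div_assoc]
    _ = ((j + t + 1).choose (j + 2) : ℚ) / (j + t).choose t := by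
        rw [← sum_div, ← Nat.cast_sum, Nat.sum_Icc_mul_choose_add_sub]
    _ = t * (j + t + 1) / ((j + 1) * (j + 2)) := Nat.cast_choose_add_two_div_cast_choose j t

theorem binom_ratio_sum_weighted (j t : ℕ) (ht : 1 ≤ t) :
    ∑ s ∈ Finset.Icc 1 t, (s : ℚ) * (Nat.choose t s : ℚ) / (Nat.choose (j + t) s : ℚ)
      = (t : ℚ) * (j + t + 1) / ((j + 1) * (j + 2)) :=
  binom_ratio_sum_weighted_general j t
end

section
/- For any j ∈ {1,…,n-1} and any coalition S ⊆ N \ {j, j+1} with |S| = s: if S ∩ {1,…,j} = ∅ then v_g(S∪{j}) - v_g(S∪{j+1}) = ((n-s-1)·s/n²)·(v_j - v_{j+1}); if S ∩ {1,…,j} ≠ ∅ then v_g(S∪{j}) - v_g(S∪{j+1}) = -((n-s-1)/n²)·(v_j - v_{j+1}). -/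
/-!
Both coalitions `S ∪ {j}` and `S ∪ {j + 1}` have `s + 1` members, so only the sums of gaps
`b - v_i` differ. Since `v` is antitone, if `S` lies above `j` the inserted agent is the top
one and sets `b`, so each of the `s` gaps of `S` drops by `v_j - v_{j+1}`; otherwise `b = max_S v`
in both coalitions and only the inserted agent's own gap changes, growing by `v_j - v_{j+1}`.
-/

open Finset

/-- The gain game: worth of a coalition `S` among `n` agents with valuations `v`. -/
noncomputable def vg (n : ℕ) (v : ℕ → ℝ) (S : Finset ℕ) : ℝ :=
  if h : S.Nonempty then
    ((n : ℝ) - S.card) / (n : ℝ) ^ 2 * ∑ i ∈ S, (S.sup' h v - v i)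
  else 0

section

variable {n : ℕ} {v : ℕ → ℝ} {S : Finset ℕ} {a : ℕ}

lemma vg_insert_of_notMem (ha : a ∉ S) :
    vg n v (insert a S) = ((n : ℝ) - (#S + 1)) / (n : ℝ) ^ 2 *
      ((insert a S).sup' (insert_nonempty a S) v - v a +
        ∑ i ∈ S, ((insert a S).sup' (insert_nonempty a S) v - v i)) := by
  rw [vg, dif_pos (insert_nonempty a S), card_insert_of_notMem ha, sum_insert ha]
  push_cast
  ring

lemma sup'_insert_eq_of_forall_le (hv : Antitone v) (hle : ∀ i ∈ S, a ≤ i) :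
    (insert a S).sup' (insert_nonempty a S) v = v a := by
  refine le_antisymm (sup'_le _ _ fun i hi => ?_) (le_sup' v (mem_insert_self a S))
  rcases mem_insert.1 hi with rfl | hi
  · exact le_rfl
  · exact hv (hle i hi)

lemma sup'_insert_eq_of_le (hv : Antitone v) {i₀ : ℕ} (hi₀ : i₀ ∈ S) (h : i₀ ≤ a) :
    (insert a S).sup' (insert_nonempty a S) v = S.sup' ⟨i₀, hi₀⟩ v := by
  rw [sup'_insert]
  exact sup_eq_right.2 ((hv h).trans (le_sup' v hi₀))

lemma vg_insert_of_forall_le (hv : Antitone v) (ha : a ∉ S) (hle : ∀ i ∈ S, a ≤ i) :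
    vg n v (insert a S) = ((n : ℝ) - (#S + 1)) / (n : ℝ) ^ 2 * ∑ i ∈ S, (v a - v i) := by
  rw [vg_insert_of_notMem ha, sup'_insert_eq_of_forall_le hv hle, sub_self, zero_add]

lemma vg_insert_of_le (hv : Antitone v) (ha : a ∉ S) {i₀ : ℕ} (hi₀ : i₀ ∈ S) (h : i₀ ≤ a) :
    vg n v (insert a S) = ((n : ℝ) - (#S + 1)) / (n : ℝ) ^ 2 *
      (S.sup' ⟨i₀, hi₀⟩ v - v a + ∑ i ∈ S, (S.sup' ⟨i₀, hi₀⟩ v - v i)) := by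
  rw [vg_insert_of_notMem ha, sup'_insert_eq_of_le hv hi₀ h]

end

lemma sum_sub_sub_sum_sub {ι : Type*} (S : Finset ι) (v : ι → ℝ) (a b : ι) :
    ∑ i ∈ S, (v a - v i) - ∑ i ∈ S, (v b - v i) = #S * (v a - v b) := by
  rw [← sum_sub_distrib]
  simp only [sub_sub_sub_cancel_right, sum_const, nsmul_eq_mul]

theorem adjacent_diff_general (n : ℕ) (v : ℕ → ℝ)
    (hv : ∀ i j, i ≤ j → v j ≤ v i)
    (j : ℕ)
    (S : Finset ℕ) (hS : S ⊆ (Finset.Icc 1 n) \ {j, j + 1}) :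
    (S ∩ Finset.Icc 1 j = ∅ →
      vg n v (insert j S) - vg n v (insert (j + 1) S)
        = ((n : ℝ) - S.card - 1) * S.card / (n : ℝ) ^ 2 * (v j - v (j + 1))) ∧
    (S ∩ Finset.Icc 1 j ≠ ∅ →
      vg n v (insert j S) - vg n v (insert (j + 1) S)
        = -(((n : ℝ) - S.card - 1) / (n : ℝ) ^ 2) * (v j - v (j + 1))) := by
  have hv : Antitone v := hv
  have hmem : ∀ i ∈ S, (1 ≤ i ∧ i ≤ n) ∧ ¬(i = j ∨ i = j + 1) := fun i hi => by
    simpa only [mem_sdiff, mem_Icc, mem_insert, mem_singleton] using hS hi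
  have hjS : j ∉ S := fun h => (hmem j h).2 (.inl rfl)
  have hj₁S : j + 1 ∉ S := fun h => (hmem _ h).2 (.inr rfl)
  constructor
  · intro hempty
    have hlt : ∀ i ∈ S, j < i := fun i hi => not_le.1 fun hij =>
      eq_empty_iff_forall_notMem.1 hempty i (mem_inter.2 ⟨hi, mem_Icc.2 ⟨(hmem i hi).1.1, hij⟩⟩)
    rw [vg_insert_of_forall_le hv hjS fun i hi => (hlt i hi).le,
      vg_insert_of_forall_le hv hj₁S hlt, ← mul_sub, sum_sub_sub_sum_sub]
    ring
  · intro hne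
    obtain ⟨i₀, hi₀⟩ := nonempty_iff_ne_empty.2 hne
    obtain ⟨hi₀S, hi₀j⟩ := mem_inter.1 hi₀
    have hi₀j : i₀ ≤ j := (mem_Icc.1 hi₀j).2
    rw [vg_insert_of_le hv hjS hi₀S hi₀j, vg_insert_of_le hv hj₁S hi₀S (hi₀j.trans j.le_succ)]
    ring

theorem adjacent_diff (n : ℕ) (v : ℕ → ℝ)
    (hv : ∀ i j, i ≤ j → v j ≤ v i)
    (j : ℕ) (hj : j ∈ Finset.Icc 1 (n - 1))
    (S : Finset ℕ) (hS : S ⊆ (Finset.Icc 1 n) \ {j, j + 1}) :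
    (S ∩ Finset.Icc 1 j = ∅ →
      vg n v (insert j S) - vg n v (insert (j + 1) S)
        = ((n : ℝ) - S.card - 1) * S.card / (n : ℝ) ^ 2 * (v j - v (j + 1))) ∧
    (S ∩ Finset.Icc 1 j ≠ ∅ →
      vg n v (insert j S) - vg n v (insert (j + 1) S)
        = -(((n : ℝ) - S.card - 1) / (n : ℝ) ^ 2) * (v j - v (j + 1))) :=
  adjacent_diff_general n v hv j S hS
end

section
/- The marginal contribution formula: for i ∈ N and nonempty S ⊆ N \ {i} with |S| = s, v_g(S∪{i}) - v_g(S) = ((n-s-1)/n²)·max{ s(v_i - b^S), b^S - v_i } - (1/n²)·Σ_{k∈S}(b^S - v_k). -/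
open Finset

/-!
Adding `i` to `S` replaces the top valuation `b = b^S` by `max (v i) b`. If `v i ≥ b`, each of the
`s` gaps in `S` grows by `v i - b` and the new gap is `0`; otherwise the old gaps are unchanged and
the new gap is `b - v i`. Since `s * (v i - b)` and `b - v i` have opposite signs, both cases say
that the gap sum grows by their maximum. The factor `(n - s) / n²` drops to `(n - s - 1) / n²`,
which accounts for the term `-(1 / n²) · ∑ (b - v k)`.
-/

theorem sum_sub_eq_sum_sub_add_card_mul {α R : Type*} [CommRing R] (S : Finset α) (v : α → R)
    (b c : R) :
    ∑ k ∈ S, (c - v k) = ∑ k ∈ S, (b - v k) + #S * (c - b) := by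
  rw [← nsmul_eq_mul, ← sum_const, ← sum_add_distrib]
  exact sum_congr rfl fun _ _ => by ring

theorem sum_sup'_insert_sub {α R : Type*} [DecidableEq α] [CommRing R] [LinearOrder R]
    [IsStrictOrderedRing R] {S : Finset α} (hS : S.Nonempty) {i : α} (hi : i ∉ S) (v : α → R) :
    ∑ k ∈ insert i S, ((insert i S).sup' (insert_nonempty i S) v - v k)
      = ∑ k ∈ S, (S.sup' hS v - v k) + max (#S * (v i - S.sup' hS v)) (S.sup' hS v - v i) := by
  set b := S.sup' hS v
  rw [sup'_insert (H := hS), sum_insert hi]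
  rcases le_total b (v i) with hb | hb
  · have hmax : max (#S * (v i - b)) (b - v i) = #S * (v i - b) :=
      max_eq_left <| (sub_nonpos.mpr hb).trans <| mul_nonneg (Nat.cast_nonneg _) (sub_nonneg.mpr hb)
    rw [max_eq_left hb, hmax, sub_self, zero_add, sum_sub_eq_sum_sub_add_card_mul S v b]
  · have hmax : max (#S * (v i - b)) (b - v i) = b - v i :=
      max_eq_right <| (mul_nonpos_of_nonneg_of_nonpos (Nat.cast_nonneg _)
        (sub_nonpos.mpr hb)).trans (sub_nonneg.mpr hb)
    rw [max_eq_right hb, hmax, add_comm]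

theorem marginal_contribution_general (n : ℕ) (v : ℕ → ℝ)
    (i : ℕ)
    (S : Finset ℕ) (hS : S ⊆ (Finset.Icc 1 n).erase i) (hNe : S.Nonempty) :
    vg n v (insert i S) - vg n v S
      = ((n : ℝ) - S.card - 1) / (n : ℝ) ^ 2 *
          max ((S.card : ℝ) * (v i - S.sup' hNe v)) (S.sup' hNe v - v i)
        - (1 / (n : ℝ) ^ 2) * ∑ k ∈ S, (S.sup' hNe v - v k) := by
  have hiS : i ∉ S := fun h => (mem_erase.mp (hS h)).1 rfl
  rw [vg, vg, dif_pos (insert_nonempty i S), dif_pos hNe, card_insert_of_notMem hiS,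
    sum_sup'_insert_sub hNe hiS]
  push_cast
  ring

theorem marginal_contribution (n : ℕ) (v : ℕ → ℝ)
    (hv : ∀ i j, i ≤ j → v j ≤ v i)
    (i : ℕ) (hi : i ∈ Finset.Icc 1 n)
    (S : Finset ℕ) (hS : S ⊆ (Finset.Icc 1 n).erase i) (hNe : S.Nonempty) :
    vg n v (insert i S) - vg n v S
      = ((n : ℝ) - S.card - 1) / (n : ℝ) ^ 2 *
          max ((S.card : ℝ) * (v i - S.sup' hNe v)) (S.sup' hNe v - v i)
        - (1 / (n : ℝ) ^ 2) * ∑ k ∈ S, (S.sup' hNe v - v k) :=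
  marginal_contribution_general n v i S hS hNe
end

section
/- For n > 2, there is no collusion prone player: for every i ∈ N there exists j ∈ {1,…,n-1} with ψ_{ij} < 0. -/
open Finset

/-- The coefficient `c(n,j)`. -/
noncomputable def cc (n j : ℕ) : ℝ :=
  (2 * (n : ℝ) - 3 * j - (j : ℝ) ^ 2) / (2 * n * ((j : ℝ) + 1) * ((j : ℝ) + 2))

/-- The Shapley-value coefficient matrix `ψ_{ij}`. -/
noncomputable def psi (n i j : ℕ) : ℝ :=
  if i ≤ j then ((n : ℝ) - j) * cc n j else -(j : ℝ) * cc n j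

/-! The sign of `ψ_{1,n-1}` comes from `c(n,n-1) < 0`, i.e. `(n-2)(n+1) > 0`; for `i ≥ 2` the sign
of `ψ_{i,1}` comes from `c(n,1) = (n-2)/(6n) > 0`. -/

lemma cc_pos {n j : ℕ} (h : 3 * j + j ^ 2 < 2 * n) : 0 < cc n j := by
  have h' : (3 * j + j ^ 2 : ℝ) < 2 * n := by exact_mod_cast h
  unfold cc
  apply div_pos (by linarith)
  have : (0 : ℝ) < n := by linarith [sq_nonneg (j : ℝ), (j.cast_nonneg : (0 : ℝ) ≤ j)]
  positivity

lemma cc_neg {n j : ℕ} (hn : 0 < n) (h : 2 * n < 3 * j + j ^ 2) : cc n j < 0 := by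
  have h' : (2 * n : ℝ) < 3 * j + j ^ 2 := by exact_mod_cast h
  unfold cc
  exact div_neg_of_neg_of_pos (by linarith) (by positivity)

lemma psi_neg_of_le {n i j : ℕ} (hij : i ≤ j) (hjn : j < n) (hc : cc n j < 0) :
    psi n i j < 0 := by
  have : (j : ℝ) < n := by exact_mod_cast hjn
  rw [psi, if_pos hij]
  exact mul_neg_of_pos_of_neg (by linarith) hc

lemma psi_neg_of_lt {n i j : ℕ} (hji : j < i) (hj : 0 < j) (hc : 0 < cc n j) :
    psi n i j < 0 := by
  rw [psi, if_neg hji.not_ge, neg_mul]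
  exact neg_neg_of_pos (mul_pos (by exact_mod_cast hj) hc)

theorem no_collusion_prone (n : ℕ) (hn : 2 < n) :
    ∀ i ∈ Finset.Icc 1 n, ∃ j ∈ Finset.Icc 1 (n - 1), psi n i j < 0 := by
  intro i hi
  rw [Finset.mem_Icc] at hi
  rcases hi.1.eq_or_lt with rfl | hi1
  · refine ⟨n - 1, Finset.mem_Icc.2 ⟨by omega, le_rfl⟩, psi_neg_of_le (by omega) (by omega) ?_⟩
    apply cc_neg (by omega)
    obtain ⟨m, rfl⟩ : ∃ m, n = m + 3 := ⟨n - 3, by omega⟩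
    rw [show m + 3 - 1 = m + 2 by omega]
    nlinarith
  · exact ⟨1, Finset.mem_Icc.2 ⟨le_rfl, by omega⟩, psi_neg_of_lt hi1 one_pos (cc_pos (by omega))⟩
end

section
/- Among coalitions of fixed cardinality s ≥ 2, the coalition S_s = {1} ∪ {n+2-s, …, n} maximizes the gain game: v_g(S_s) ≥ v_g(S) for every S ⊆ N with |S| = s, and v_g(S_s) = ((n-s)/n²)·Σ_{i=n+2-s}^{n}(v_1 - v_i). -/
open Finset

/-- The maximal-gain coalition of cardinality `s`: `S_s = {1} ∪ {n+2-s, …, n}`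
(which equals `{1}` for `s = 1`). -/
def Ss (n s : ℕ) : Finset ℕ := insert 1 (Finset.Icc (n + 2 - s) n)

/-! Since `v` is antitone, its maximum on `S` is `v a` for the least member `a`, so `v_g(S)` is
`(n - |S|)/n²` times `∑_{i ∈ S \ {a}} (v a - v i)`. Replacing `v a` by `v 1` and the other members
by the `|S| - 1` largest indices only increases this sum, and `S_s` does both at once. -/

namespace Finset

variable {ι M : Type*} [DecidableEq ι] [AddCommMonoid M] [PartialOrder M] [IsOrderedAddMonoid M]

theorem sum_le_sum_of_card_eq_of_sdiff_le {s t : Finset ι} {f : ι → M} (hcard : #s = #t) (c : M)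
    (hs : ∀ i ∈ s \ t, f i ≤ c) (ht : ∀ j ∈ t \ s, c ≤ f j) :
    ∑ i ∈ s, f i ≤ ∑ j ∈ t, f j :=
  calc ∑ i ∈ s, f i ≤ ∑ i ∈ s ∩ t, f i + #(s \ t) • c := by
        rw [← sum_inter_add_sum_sdiff s t]
        gcongr
        exact sum_le_card_nsmul _ _ _ hs
    _ = ∑ j ∈ t ∩ s, f j + #(t \ s) • c := by rw [inter_comm, card_sdiff_comm hcard]
    _ ≤ ∑ j ∈ t, f j := by
        rw [← sum_inter_add_sum_sdiff t s]
        gcongr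
        exact card_nsmul_le_sum _ _ _ ht

end Finset

theorem Monotone.sum_le_sum_Icc_of_subset_Iic {M : Type*} [AddCommMonoid M] [PartialOrder M]
    [IsOrderedAddMonoid M] {g : ℕ → M} (hg : Monotone g) {S : Finset ℕ} {n : ℕ}
    (hS : S ⊆ Iic n) : ∑ i ∈ S, g i ≤ ∑ i ∈ Icc (n + 1 - #S) n, g i := by
  have hcard : #S ≤ n + 1 := by simpa using card_le_card hS
  refine sum_le_sum_of_card_eq_of_sdiff_le (by rw [Nat.card_Icc]; omega) (g (n + 1 - #S)) ?_ ?_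
  · intro i hi
    have hin := mem_Iic.mp (hS (mem_sdiff.mp hi).1)
    have hiT := (mem_sdiff.mp hi).2
    exact hg (by simp only [mem_Icc, not_and_or, not_le] at hiT; omega)
  · intro j hj
    exact hg (mem_Icc.mp (mem_sdiff.mp hj).1).1

theorem vg_eq_sum_erase_of_isLeast {v : ℕ → ℝ} (hv : Antitone v) {S : Finset ℕ} {a : ℕ}
    (ha : IsLeast (S : Set ℕ) a) (n : ℕ) :
    vg n v S = ((n : ℝ) - #S) / (n : ℝ) ^ 2 * ∑ i ∈ S.erase a, (v a - v i) := by
  have hne : S.Nonempty := ⟨a, ha.1⟩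
  have hsup : S.sup' hne v = v a :=
    le_antisymm (sup'_le _ _ fun i hi => hv (ha.2 hi)) (le_sup' v ha.1)
  rw [vg, dif_pos hne, hsup, sum_erase _ (sub_self _)]

theorem card_Ss {n s : ℕ} (hs : 1 ≤ s) (hsn : s ≤ n) : #(Ss n s) = s := by
  rw [Ss, card_insert_of_notMem (by simp only [mem_Icc]; omega), Nat.card_Icc]
  omega

theorem isLeast_one_Ss {n s : ℕ} (hsn : s ≤ n) : IsLeast (Ss n s : Set ℕ) 1 := by
  refine ⟨mem_insert_self _ _, fun i hi => ?_⟩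
  rcases mem_insert.mp hi with rfl | hi
  · rfl
  · exact le_trans (by omega) (mem_Icc.mp hi).1

theorem vg_Ss {n s : ℕ} {v : ℕ → ℝ} (hv : Antitone v) (hs : 1 ≤ s) (hsn : s ≤ n) :
    vg n v (Ss n s) = ((n : ℝ) - s) / (n : ℝ) ^ 2 * ∑ i ∈ Icc (n + 2 - s) n, (v 1 - v i) := by
  rw [vg_eq_sum_erase_of_isLeast hv (isLeast_one_Ss hsn), card_Ss hs hsn, Ss,
    erase_insert (by simp only [mem_Icc]; omega)]

theorem sum_erase_le_sum_Icc {n : ℕ} {v : ℕ → ℝ} (hv : Antitone v) {S : Finset ℕ}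
    (hS : S ⊆ Icc 1 n) {a : ℕ} (ha : a ∈ S) :
    ∑ i ∈ S.erase a, (v a - v i) ≤ ∑ i ∈ Icc (n + 2 - #S) n, (v 1 - v i) := by
  have hva : v a ≤ v 1 := hv (mem_Icc.mp (hS ha)).1
  have hcard : n + 1 - #(S.erase a) = n + 2 - #S := by
    rw [card_erase_of_mem ha]
    have := card_pos.mpr ⟨a, ha⟩
    omega
  calc ∑ i ∈ S.erase a, (v a - v i) ≤ ∑ i ∈ S.erase a, (v 1 - v i) := by gcongr
    _ ≤ ∑ i ∈ Icc (n + 2 - #S) n, (v 1 - v i) := by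
        rw [← hcard]
        refine Monotone.sum_le_sum_Icc_of_subset_Iic (fun i j hij => ?_) fun i hi => ?_
        · exact sub_le_sub_left (hv hij) _
        · exact mem_Iic.mpr (mem_Icc.mp (hS (mem_of_mem_erase hi))).2

theorem maximal_coalition (n : ℕ) (v : ℕ → ℝ)
    (hv : ∀ i j, i ≤ j → v j ≤ v i)
    (s : ℕ) (hs : 2 ≤ s) (hsn : s ≤ n) :
    (∀ S ⊆ Finset.Icc 1 n, S.card = s → vg n v S ≤ vg n v (Ss n s)) ∧
    vg n v (Ss n s)
      = ((n : ℝ) - s) / (n : ℝ) ^ 2 * ∑ i ∈ Finset.Icc (n + 2 - s) n, (v 1 - v i) := by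
  have hanti : Antitone v := fun i j hij => hv i j hij
  refine ⟨fun S hS hcard => ?_, vg_Ss hanti (by omega) hsn⟩
  have hne : S.Nonempty := card_pos.mp (by omega)
  rw [vg_eq_sum_erase_of_isLeast hanti (S.isLeast_min' hne), vg_Ss hanti (by omega) hsn, hcard]
  have hcoeff : 0 ≤ ((n : ℝ) - s) / (n : ℝ) ^ 2 :=
    div_nonneg (sub_nonneg.mpr (by exact_mod_cast hsn)) (by positivity)
  exact mul_le_mul_of_nonneg_left (hcard ▸ sum_erase_le_sum_Icc hanti hS (S.min'_mem hne)) hcoeff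
end

section
/- The per-capita increment satisfies δ(s) = [ (n+s-s²)(v_1 - v_{n+2-s}) - n·Σ_{j=n+3-s}^{n}(v_{n+2-s} - v_j) ] / (n²·s·(s-1)) for s ∈ {2,…,n}, where δ(s) = v_g(S_s)/s - v_g(S_{s-1})/(s-1). -/
open Finset

/-! Since `v` is antitone, agent 1 is the maximiser of every `S_s`, so
`v_g(S_s) = ((n - s)/n²) · Σ_{i=n+2-s}^{n} (v₁ - vᵢ)`. The sums for `S_s` and `S_{s-1}` differ
only by the term of agent `n+2-s`, and re-centering the remaining terms at `v_{n+2-s}` turns the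
difference of the per-capita values into the stated formula. -/

theorem vg_eq_of_mem_of_forall_le {n : ℕ} {v : ℕ → ℝ} {S : Finset ℕ} {m : ℕ} (hm : m ∈ S)
    (hle : ∀ i ∈ S, v i ≤ v m) :
    vg n v S = ((n : ℝ) - #S) / (n : ℝ) ^ 2 * ∑ i ∈ S, (v m - v i) := by
  have hS : S.Nonempty := ⟨m, hm⟩
  rw [vg, dif_pos hS, le_antisymm (sup'_le hS v hle) (le_sup' v hm)]

theorem one_notMem_Icc_Ss {n s : ℕ} (hsn : s ≤ n) : 1 ∉ Icc (n + 2 - s) n := by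
  simp only [mem_Icc]
  omega

theorem sum_sub_eq_sum_sub_card_mul {ι R : Type*} [CommRing R] (T : Finset ι) (f : ι → R)
    (c d : R) :
    ∑ j ∈ T, (c - f j) = ∑ j ∈ T, (d - f j) - #T * (d - c) := by
  rw [← nsmul_eq_mul, ← sum_const, ← sum_sub_distrib]
  exact sum_congr rfl fun _ _ ↦ by ring

theorem percapita_increment_formula (n : ℕ) (v : ℕ → ℝ)
    (hv : ∀ i j, i ≤ j → v j ≤ v i)
    (s : ℕ) (hs : 2 ≤ s) (hsn : s ≤ n) :
    vg n v (Ss n s) / s - vg n v (Ss n (s - 1)) / ((s : ℝ) - 1)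
      = (((n : ℝ) + s - (s : ℝ) ^ 2) * (v 1 - v (n + 2 - s))
          - (n : ℝ) * ∑ j ∈ Finset.Icc (n + 3 - s) n, (v (n + 2 - s) - v j))
        / ((n : ℝ) ^ 2 * s * ((s : ℝ) - 1)) := by
  set B := ∑ j ∈ Icc (n + 3 - s) n, (v 1 - v j)
  have hcur : vg n v (Ss n s) = ((n : ℝ) - s) / (n : ℝ) ^ 2 * (v 1 - v (n + 2 - s) + B) := by
    rw [vg_Ss hv (by omega) hsn, ← insert_Icc_succ_left_eq_Icc (by omega), Order.succ_eq_add_one,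
      sum_insert (by simp), show n + 2 - s + 1 = n + 3 - s by omega]
  have hprev : vg n v (Ss n (s - 1)) = ((n : ℝ) - (s - 1)) / (n : ℝ) ^ 2 * B := by
    rw [vg_Ss hv (by omega) (by omega), show n + 2 - (s - 1) = n + 3 - s by omega,
      Nat.cast_sub (by omega : 1 ≤ s), Nat.cast_one]
  have htail : ∑ j ∈ Icc (n + 3 - s) n, (v (n + 2 - s) - v j)
      = B - ((s : ℝ) - 2) * (v 1 - v (n + 2 - s)) := by
    rw [sum_sub_eq_sum_sub_card_mul _ _ _ (v 1), Nat.card_Icc,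
      show n + 1 - (n + 3 - s) = s - 2 by omega, Nat.cast_sub hs, Nat.cast_two]
  have hn : (n : ℝ) ≠ 0 := by norm_cast; omega
  have hs0 : (s : ℝ) ≠ 0 := by norm_cast; omega
  have hs1 : (s : ℝ) - 1 ≠ 0 := sub_ne_zero.mpr (by norm_cast; omega)
  rw [hcur, hprev, htail]
  field_simp
  ring
end
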